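/- For every C* > 0 there exists a constant C > 0, depending only on C*, with the following property. Let x, y, z ∈ ℝ² with |det(y−x, z−x)|/2 ≥ C*·diam(κ)², where κ = conv{x,y,z} and diam(κ) = max(|y−x|, |z−x|, |z−y|); let m₁ = (x+y)/2, m₂ = (y+z)/2, m₃ = (z+x)/2 be the edge midpoints. Let g : ℝ² → ℝ³ be twice continuously differentiable with ‖D²g(q)‖ ≤ K₂ for all q ∈ κ, let ε ≥ 0, and let w₁, w₂, w₃ ∈ ℝ³ satisfy |wᵢ − g(mᵢ)| ≤ ε for i = 1, 2, 3. Let N : ℝ² → ℝ³ be the unique affine map with N(mᵢ) = wᵢ for i = 1, 2, 3. Then sup_{q ∈ κ} ‖∇N − ∇g(q)‖ ≤ C·(K₂·diam(κ) + ε/diam(κ)). -/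

import Mathlib

/-!
On a `C*`-regular triangle the two midpoint differences `e = m₂ - m₁` and `f = m₃ - m₁` have length
at most `diam κ / 2` and determinant `det(e, f) ≥ C*·diam(κ)²/2` in absolute value, so by Cramer's
rule a linear map `L : ℝ² → ℝ³` satisfies `‖L‖ ≲ (‖L e‖ + ‖L f‖) / (C*·diam κ)`. For
`L = ∇N - ∇g(q)`, the value `L (mᵢ - m₁)` is the first-order Taylor remainder of `g` between
midpoints (taken with the derivative frozen at `q`), which is `O(K₂·diam²)`, up to the data errors
`2ε`.
-/

open scoped RealInnerProductSpace

noncomputable section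

/-- Euclidean plane and 3-space. -/
abbrev E2 := EuclideanSpace ℝ (Fin 2)
abbrev E3 := EuclideanSpace ℝ (Fin 3)

/-- The diameter of the triangle `conv{x,y,z} ⊂ ℝ²`. -/
def diam2 (x y z : E2) : ℝ := max ‖y - x‖ (max ‖z - x‖ ‖z - y‖)

/-- The determinant `det(a, b)` of two vectors in `ℝ²`. -/
def det2 (a b : E2) : ℝ := a 0 * b 1 - a 1 * b 0

section Taylor

variable {E F : Type*} [NormedAddCommGroup E] [NormedSpace ℝ E] [NormedAddCommGroup F]
  [NormedSpace ℝ F] {g : E → F} {s : Set E} {K : ℝ}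

theorem Convex.norm_fderiv_sub_le_of_norm_iteratedFDeriv_two_le (hs : Convex ℝ s)
    (hg : ContDiff ℝ 2 g) (hK : ∀ p ∈ s, ‖iteratedFDeriv ℝ 2 g p‖ ≤ K) {p q : E}
    (hp : p ∈ s) (hq : q ∈ s) : ‖fderiv ℝ g p - fderiv ℝ g q‖ ≤ K * ‖p - q‖ := by
  have hg' : Differentiable ℝ (fderiv ℝ g) :=
    (hg.fderiv_right (m := 1) (by norm_num)).differentiable one_ne_zero
  refine hs.norm_image_sub_le_of_norm_hasFDerivWithin_le
    (fun r _ => (hg' r).hasFDerivAt.hasFDerivWithinAt) (fun r hr => ?_) hq hp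
  rw [← norm_iteratedFDeriv_one, norm_iteratedFDeriv_fderiv]
  exact hK r hr

theorem Convex.norm_sub_sub_fderiv_le_of_norm_iteratedFDeriv_two_le (hs : Convex ℝ s)
    (hg : ContDiff ℝ 2 g) (hK : ∀ p ∈ s, ‖iteratedFDeriv ℝ 2 g p‖ ≤ K) {q : E} (hq : q ∈ s)
    {R : ℝ} (hR : ∀ p ∈ s, ‖p - q‖ ≤ R) {a b : E} (ha : a ∈ s) (hb : b ∈ s) :
    ‖g b - g a - fderiv ℝ g q (b - a)‖ ≤ K * R * ‖b - a‖ := by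
  have hK₀ : 0 ≤ K := (norm_nonneg _).trans (hK q hq)
  refine hs.norm_image_sub_le_of_norm_hasFDerivWithin_le'
    (fun r _ => ((hg.differentiable two_ne_zero) r).hasFDerivAt.hasFDerivWithinAt)
    (fun p hp => ?_) ha hb
  exact (hs.norm_fderiv_sub_le_of_norm_iteratedFDeriv_two_le hg hK hp hq).trans
    (mul_le_mul_of_nonneg_left (hR p hp) hK₀)

theorem AffineMap.norm_linear_apply_sub_le (N : E →ᵃ[ℝ] F) (A : E →L[ℝ] F) {a b : E} {M ε : ℝ}
    (hab : ‖g b - g a - A (b - a)‖ ≤ M) (ha : ‖N a - g a‖ ≤ ε) (hb : ‖N b - g b‖ ≤ ε) :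
    ‖N.linear (b - a) - A (b - a)‖ ≤ M + 2 * ε := by
  have hsplit : N.linear (b - a) - A (b - a) =
      (N b - g b) - (N a - g a) + (g b - g a - A (b - a)) := by
    rw [← vsub_eq_sub b a, N.linearMap_vsub, vsub_eq_sub]
    abel
  rw [hsplit]
  linarith [norm_add_le (N b - g b - (N a - g a)) (g b - g a - A (b - a)),
    norm_sub_le (N b - g b) (N a - g a)]

end Taylor

theorem abs_det2_le (v w : E2) : |det2 v w| ≤ ‖v‖ * ‖w‖ := by
  have hsq : det2 v w ^ 2 ≤ (‖v‖ * ‖w‖) ^ 2 := by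
    rw [mul_pow, EuclideanSpace.real_norm_sq_eq, EuclideanSpace.real_norm_sq_eq, Fin.sum_univ_two,
      Fin.sum_univ_two, det2]
    nlinarith [sq_nonneg (v 0 * w 0 + v 1 * w 1)]
  exact abs_le_of_sq_le_sq hsq (by positivity)

theorem det2_smul_smul (c c' : ℝ) (a b : E2) : det2 (c • a) (c' • b) = c * c' * det2 a b := by
  simp only [det2, PiLp.smul_apply, smul_eq_mul]
  ring

/-- Cramer's rule in `ℝ²`. -/
theorem eq_det2_div_smul_add (e f v : E2) (hD : det2 e f ≠ 0) :
    v = (det2 v f / det2 e f) • e + (det2 e v / det2 e f) • f := by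
  ext i
  fin_cases i <;>
    · simp only [PiLp.add_apply, PiLp.smul_apply, smul_eq_mul, Fin.mk_zero, Fin.mk_one]
      field_simp
      simp only [det2]
      ring

theorem ContinuousLinearMap.opNorm_le_of_det2_ne_zero {F : Type*} [NormedAddCommGroup F]
    [NormedSpace ℝ F] (L : E2 →L[ℝ] F) {e f : E2} (hD : det2 e f ≠ 0) :
    ‖L‖ ≤ (‖f‖ * ‖L e‖ + ‖e‖ * ‖L f‖) / |det2 e f| := by
  have hD' : 0 < |det2 e f| := abs_pos.mpr hD
  refine L.opNorm_le_bound (by positivity) fun v => ?_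
  conv_lhs => rw [eq_det2_div_smul_add e f v hD, map_add, map_smul, map_smul]
  calc _ ≤ |det2 v f| / |det2 e f| * ‖L e‖ + |det2 e v| / |det2 e f| * ‖L f‖ := by
        simpa only [norm_smul, Real.norm_eq_abs, abs_div] using
          norm_add_le ((det2 v f / det2 e f) • L e) ((det2 e v / det2 e f) • L f)
    _ ≤ ‖v‖ * ‖f‖ / |det2 e f| * ‖L e‖ + ‖e‖ * ‖v‖ / |det2 e f| * ‖L f‖ := by
        gcongr <;> exact abs_det2_le _ _
    _ = _ := by ring

section Triangle

variable {x y z : E2}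

theorem diam2_pos (h : ¬ Collinear ℝ ({x, y, z} : Set E2)) : 0 < diam2 x y z := by
  have hyx : y ≠ x := by
    rintro rfl
    exact h (by rw [Set.insert_comm, Set.insert_idem]; exact collinear_pair ℝ _ _)
  exact (norm_pos_iff.mpr (sub_ne_zero.mpr hyx)).trans_le (le_max_left _ _)

theorem norm_sub_le_diam2 {p p' : E2} (hp : p ∈ convexHull ℝ ({x, y, z} : Set E2))
    (hp' : p' ∈ convexHull ℝ ({x, y, z} : Set E2)) : ‖p - p'‖ ≤ diam2 x y z := by
  have hfin : Bornology.IsBounded (convexHull ℝ ({x, y, z} : Set E2)) :=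
    isBounded_convexHull.mpr (Set.toFinite _).isBounded
  rw [← dist_eq_norm]
  refine (Metric.dist_le_diam_of_mem hfin hp hp').trans ?_
  rw [convexHull_diam]
  refine Metric.diam_le_of_forall_dist_le ((norm_nonneg _).trans (le_max_left _ _)) ?_
  simp only [Set.mem_insert_iff, Set.mem_singleton_iff]
  rintro a (rfl | rfl | rfl) b (rfl | rfl | rfl) <;>
    simp [dist_eq_norm, diam2, norm_sub_rev]

theorem opNorm_le_of_norm_apply_midpoint_sub_le {F : Type*} [NormedAddCommGroup F]
    [NormedSpace ℝ F] (L : E2 →L[ℝ] F) {Cstar B : ℝ} (hC : 0 < Cstar)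
    (hreg : Cstar * diam2 x y z ^ 2 ≤ |det2 (y - x) (z - x)| / 2) (hd : 0 < diam2 x y z)
    (h₂ : ‖L (midpoint ℝ y z - midpoint ℝ x y)‖ ≤ B)
    (h₃ : ‖L (midpoint ℝ z x - midpoint ℝ x y)‖ ≤ B) :
    ‖L‖ ≤ 2 * B / (Cstar * diam2 x y z) := by
  set d := diam2 x y z
  set e := midpoint ℝ y z - midpoint ℝ x y with he_def
  set f := midpoint ℝ z x - midpoint ℝ x y with hf_def
  have he : e = (2 : ℝ)⁻¹ • (z - x) := by
    simp only [he_def, midpoint_eq_smul_add, invOf_eq_inv]; module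
  have hf : f = (2 : ℝ)⁻¹ • (z - y) := by
    simp only [hf_def, midpoint_eq_smul_add, invOf_eq_inv]; module
  have hne : ‖e‖ ≤ d / 2 := by
    rw [he, norm_smul]
    simp only [norm_inv, Real.norm_ofNat]
    linarith [((le_max_left _ _).trans (le_max_right _ _) : ‖z - x‖ ≤ d)]
  have hnf : ‖f‖ ≤ d / 2 := by
    rw [hf, norm_smul]
    simp only [norm_inv, Real.norm_ofNat]
    linarith [((le_max_right _ _).trans (le_max_right _ _) : ‖z - y‖ ≤ d)]
  have hdet : det2 e f = det2 (y - x) (z - x) / 4 := by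
    rw [he, hf, det2_smul_smul]
    simp only [det2, PiLp.sub_apply]
    ring
  have hDlow : Cstar * d ^ 2 / 2 ≤ |det2 e f| := by
    rw [hdet, abs_div, abs_of_pos (by norm_num : (0 : ℝ) < 4)]
    linarith
  have hD : det2 e f ≠ 0 := abs_pos.mp ((by positivity : 0 < Cstar * d ^ 2 / 2).trans_le hDlow)
  have hB : 0 ≤ B := (norm_nonneg _).trans h₂
  calc ‖L‖ ≤ (‖f‖ * ‖L e‖ + ‖e‖ * ‖L f‖) / |det2 e f| := L.opNorm_le_of_det2_ne_zero hD
    _ ≤ (d / 2 * B + d / 2 * B) / (Cstar * d ^ 2 / 2) := by gcongr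
    _ = 2 * B / (Cstar * d) := by field_simp; ring

end Triangle

/-- the linear part of the affine map interpolating, at the edge
midpoints of a regular triangle, values `ε`-close to those of a `C²` map `g`,
approximates `∇g` uniformly on the triangle to order `K₂·diam + ε/diam`. -/
theorem stmt_14 (Cstar : ℝ) (hCstar : 0 < Cstar) :
    ∃ C > (0 : ℝ),
      ∀ (x y z : E2) (g : E2 → E3) (K₂ ε : ℝ) (w₁ w₂ w₃ : E3)
        (N : E2 →ᵃ[ℝ] E3),
      ¬ Collinear ℝ ({x, y, z} : Set E2) →
      Cstar * diam2 x y z ^ 2 ≤ |det2 (y - x) (z - x)| / 2 →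
      ContDiff ℝ 2 g →
      (∀ q ∈ convexHull ℝ ({x, y, z} : Set E2),
        ‖iteratedFDeriv ℝ 2 g q‖ ≤ K₂) →
      0 ≤ ε →
      ‖w₁ - g (midpoint ℝ x y)‖ ≤ ε →
      ‖w₂ - g (midpoint ℝ y z)‖ ≤ ε →
      ‖w₃ - g (midpoint ℝ z x)‖ ≤ ε →
      N (midpoint ℝ x y) = w₁ →
      N (midpoint ℝ y z) = w₂ →
      N (midpoint ℝ z x) = w₃ →
      ∀ q ∈ convexHull ℝ ({x, y, z} : Set E2),
        ‖LinearMap.toContinuousLinearMap N.linear - fderiv ℝ g q‖ ≤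
          C * (K₂ * diam2 x y z + ε / diam2 x y z) := by
  refine ⟨4 / Cstar, by positivity, ?_⟩
  intro x y z g K₂ ε w₁ w₂ w₃ N hcol hreg hg hK _ hw₁ hw₂ hw₃ hN₁ hN₂ hN₃ q hq
  subst hN₁ hN₂ hN₃
  set d := diam2 x y z
  set s := convexHull ℝ ({x, y, z} : Set E2)
  have hd : 0 < d := diam2_pos hcol
  have hK₂ : 0 ≤ K₂ := (norm_nonneg _).trans (hK q hq)
  have hs : Convex ℝ s := convex_convexHull ℝ _
  have hmid : ∀ {a b}, a ∈ s → b ∈ s → midpoint ℝ a b ∈ s := fun ha hb =>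
    hs.segment_subset ha hb (midpoint_mem_segment _ _)
  have hx : x ∈ s := subset_convexHull ℝ _ (by simp)
  have hy : y ∈ s := subset_convexHull ℝ _ (by simp)
  have hz : z ∈ s := subset_convexHull ℝ _ (by simp)
  have hedge : ∀ m ∈ s, ‖N m - g m‖ ≤ ε →
      ‖(LinearMap.toContinuousLinearMap N.linear - fderiv ℝ g q) (m - midpoint ℝ x y)‖ ≤
        K₂ * d ^ 2 + 2 * ε := by
    intro m hm hNm
    have hTaylor := hs.norm_sub_sub_fderiv_le_of_norm_iteratedFDeriv_two_le hg hK hq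
      (fun p hp => norm_sub_le_diam2 hp hq) (hmid hx hy) hm
    have hsq : K₂ * d * ‖m - midpoint ℝ x y‖ ≤ K₂ * d ^ 2 := by
      rw [sq, ← mul_assoc]; gcongr; exact norm_sub_le_diam2 hm (hmid hx hy)
    simpa using N.norm_linear_apply_sub_le (fderiv ℝ g q) (hTaylor.trans hsq) hw₁ hNm
  calc _ ≤ 2 * (K₂ * d ^ 2 + 2 * ε) / (Cstar * d) :=
        opNorm_le_of_norm_apply_midpoint_sub_le _ hCstar hreg hd
          (hedge _ (hmid hy hz) hw₂) (hedge _ (hmid hz hx) hw₃)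
    _ ≤ 4 / Cstar * (K₂ * d + ε / d) := by
        rw [div_le_iff₀ (by positivity)]
        field_simp
        nlinarith [mul_nonneg hK₂ (sq_nonneg d)]
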